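/- Let α > 0 and let f, g ∈ ℂ^{2n-1} be discrete signals supported in {0, ..., n-1} (i.e., f[s] = g[s] = 0 for s = n, ..., 2n-2). If |f̂| = |ĝ| and |F(f[s]e^{-sα})| = |F(g[s]e^{-sα})| (where F denotes the DFT of size 2n-1), then f = e^{iφ} g for some φ ∈ ℝ. -/

import Mathlib

/-!
Write `P_f(z) = ∑ f[s] z^s`, so that `f̂[k] = P_f(ω^k)` with `ω = e^{-2πi/(2n-1)}`, and let
`P_f^*(z) = z^{n-1} conj (P_f (1 / conj z))` be its conjugate reflection. On the unit circle
`P_f P_f^* = z^{n-1} |P_f|²`, and `P_f P_f^*` has degree at most `2n-2`, so its values at the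
`2n-1` roots of unity determine it: `P_f P_f^* = P_g P_g^*`. The mask `e^{-sα}` replaces `P_f(z)`
by `P_f(rz)` with `r = e^{-α}`, which yields in the same way
`P_f(r²z) P_f^*(z) = P_g(r²z) P_g^*(z)`. Cross-multiplying the two identities gives
`P_f(qz) P_g(z) = P_f(z) P_g(qz)` with `q = r²` not a root of unity; comparing leading coefficients
then forces `P_f = c P_g`, and the first identity gives `|c| = 1`.
-/

open Complex Real

noncomputable section

/-- Discrete Fourier transform of size `N`: `ĥ[k] = Σ_{s=0}^{N-1} h[s] e^{-2πisk/N}`. -/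
def dft (N : ℕ) (h : Fin N → ℂ) (k : ℤ) : ℂ :=
  ∑ s : Fin N, h s * Complex.exp (-2 * π * Complex.I * (s : ℕ) * k / N)

open Polynomial ComplexConjugate

namespace PhaseRetrieval

theorem exists_eq_C_mul_of_comp_C_mul_X_mul_eq {K : Type*} [Field K] {q : K}
    (hq : Function.Injective (q ^ · : ℕ → K)) {P Q : K[X]} (hQ : Q ≠ 0)
    (h : P.comp (C q * X) * Q = P * Q.comp (C q * X)) : ∃ c, P = C c * Q := by
  have hq0 : q ≠ 0 := fun h0 => absurd (@hq 1 2 (by simp [h0])) (by decide)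
  have hdeg : (C q * X).natDegree ≠ 0 := by rw [natDegree_C_mul_X q hq0]; exact one_ne_zero
  set d := Q.natDegree
  refine ⟨P.coeff d / Q.leadingCoeff, ?_⟩
  set D := P - C (P.coeff d / Q.leadingCoeff) * Q with hD
  have hDd : D.coeff d = 0 := by
    rw [hD, coeff_sub, coeff_C_mul, ← leadingCoeff, div_mul_cancel₀ _ (leadingCoeff_ne_zero.2 hQ),
      sub_self]
  have hDcomm : D.comp (C q * X) * Q = D * Q.comp (C q * X) := by
    simp only [hD, sub_comp, mul_comp, C_comp]
    linear_combination h
  -- `D` vanishes at degree `deg Q`, yet its leading coefficients would force `deg D = deg Q`.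
  by_contra hne
  have hD0 : D ≠ 0 := sub_ne_zero.2 hne
  have hlead := congrArg leadingCoeff hDcomm
  rw [leadingCoeff_mul, leadingCoeff_mul, leadingCoeff_comp hdeg, leadingCoeff_comp hdeg,
    leadingCoeff_C_mul_X] at hlead
  have hpow : q ^ D.natDegree = q ^ d := by
    apply mul_left_cancel₀ (mul_ne_zero (leadingCoeff_ne_zero.2 hD0) (leadingCoeff_ne_zero.2 hQ))
    linear_combination hlead
  exact hD0 (leadingCoeff_eq_zero.1 (by rw [leadingCoeff, hq hpow, hDd]))

def conjReflect (m : ℕ) (P : ℂ[X]) : ℂ[X] := reflect m (P.map (starRingEnd ℂ))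

section ConjReflect

variable {m : ℕ} {P Q : ℂ[X]}

@[simp]
theorem conjReflect_eq_zero_iff : conjReflect m P = 0 ↔ P = 0 := by
  simp [conjReflect, reflect_eq_zero_iff]

theorem natDegree_conjReflect_le (hP : P.natDegree ≤ m) : (conjReflect m P).natDegree ≤ m :=
  natDegree_reflect_le.trans (by rw [natDegree_map]; omega)

theorem conjReflect_C_mul (c : ℂ) : conjReflect m (C c * P) = C (conj c) * conjReflect m P := by
  simp [conjReflect, Polynomial.map_mul, reflect_C_mul]

theorem eval_conjReflect (hP : P.natDegree ≤ m) {z : ℂ} (hz : ‖z‖ = 1) :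
    (conjReflect m P).eval z = z ^ m * conj (P.eval z) := by
  have hz0 : z ≠ 0 := norm_ne_zero_iff.1 (by rw [hz]; exact one_ne_zero)
  have hzz : z * conj z = 1 := by rw [← inv_eq_conj hz, mul_inv_cancel₀ hz0]
  let _ : Invertible (conj z) := invertibleOfLeftInverse _ _ hzz
  have h := eval₂_reflect_mul_pow (RingHom.id ℂ) (conj z) m (P.map (starRingEnd ℂ))
    (by rwa [natDegree_map])
  rw [invOf_eq_left_inv hzz, eval₂_id, eval₂_id, eval_map, eval₂_at_apply] at h
  rw [conjReflect, ← h, mul_left_comm, ← mul_pow, hzz, one_pow, mul_one]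

theorem conjReflect_comp_C_mul_X (hP : P.natDegree ≤ m) (r : ℝ) :
    (conjReflect m (P.comp (C (r : ℂ) * X))).comp (C (r : ℂ) * X) =
      C ((r : ℂ) ^ m) * conjReflect m P := by
  ext i
  simp only [comp_C_mul_X_coeff, conjReflect, coeff_reflect, coeff_map, coeff_C_mul]
  rcases le_or_gt i m with hi | hi
  · rw [revAt_le hi, map_mul, map_pow, conj_ofReal, mul_assoc, ← pow_add, Nat.sub_add_cancel hi]
    ring
  · rw [revAt_eq_self_of_lt hi, coeff_eq_zero_of_natDegree_lt (by omega)]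
    simp

theorem mul_conjReflect_eq_of_norm_eval_eq {ζ : ℂ} {N : ℕ} (hζ : IsPrimitiveRoot ζ N)
    (hN : 2 * m < N) (hP : P.natDegree ≤ m) (hQ : Q.natDegree ≤ m)
    (h : ∀ k : ℕ, ‖P.eval (ζ ^ k)‖ = ‖Q.eval (ζ ^ k)‖) :
    P * conjReflect m P = Q * conjReflect m Q := by
  refine sub_eq_zero.1 <| eq_zero_of_natDegree_lt_card_of_eval_eq_zero (ι := Fin N) _
    (f := fun k => ζ ^ (k : ℕ)) (fun i j hij => Fin.ext (hζ.pow_inj i.2 j.2 hij)) (fun k => ?_) ?_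
  · have hz : ‖ζ ^ (k : ℕ)‖ = 1 := by
      rw [norm_pow, norm_eq_one_of_pow_eq_one hζ.pow_eq_one (by omega), one_pow]
    rw [eval_sub, eval_mul, eval_mul, eval_conjReflect hP hz, eval_conjReflect hQ hz,
      mul_left_comm, mul_conj, mul_left_comm (Q.eval _), mul_conj, normSq_eq_norm_sq,
      normSq_eq_norm_sq, h, sub_self]
  · have := natDegree_conjReflect_le hP
    have := natDegree_conjReflect_le hQ
    have := natDegree_mul_le (p := P) (q := conjReflect m P)
    have := natDegree_mul_le (p := Q) (q := conjReflect m Q)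
    have := natDegree_sub_le (P * conjReflect m P) (Q * conjReflect m Q)
    simp only [Fintype.card_fin]
    omega

theorem comp_C_sq_mul_X_mul_conjReflect_eq {ζ : ℂ} {N : ℕ} (hζ : IsPrimitiveRoot ζ N)
    (hN : 2 * m < N) (hP : P.natDegree ≤ m) (hQ : Q.natDegree ≤ m) {r : ℝ} (hr : r ≠ 0)
    (h : ∀ k : ℕ,
      ‖(P.comp (C (r : ℂ) * X)).eval (ζ ^ k)‖ = ‖(Q.comp (C (r : ℂ) * X)).eval (ζ ^ k)‖) :
    P.comp (C ((r : ℂ) ^ 2) * X) * conjReflect m P =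
      Q.comp (C ((r : ℂ) ^ 2) * X) * conjReflect m Q := by
  have hr' : (r : ℂ) ≠ 0 := ofReal_ne_zero.2 hr
  have hdeg : ∀ {R : ℂ[X]}, R.natDegree ≤ m → (R.comp (C (r : ℂ) * X)).natDegree ≤ m := by
    intro R hR
    rwa [natDegree_comp, natDegree_C_mul_X _ hr', mul_one]
  have hsq : (C (r : ℂ) * X).comp (C (r : ℂ) * X) = C ((r : ℂ) ^ 2) * X := by
    rw [mul_comp, C_comp, X_comp, C_pow]
    ring
  have hscaled := congrArg (·.comp (C (r : ℂ) * X))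
    (mul_conjReflect_eq_of_norm_eval_eq hζ hN (hdeg hP) (hdeg hQ) h)
  simp only [mul_comp, comp_assoc, hsq, conjReflect_comp_C_mul_X hP,
    conjReflect_comp_C_mul_X hQ] at hscaled
  refine mul_left_cancel₀ (C_ne_zero.2 (pow_ne_zero m hr')) ?_
  linear_combination hscaled

theorem exists_norm_eq_one_eq_C_mul_of_norm_eval_eq {ζ : ℂ} {N : ℕ} (hζ : IsPrimitiveRoot ζ N)
    (hN : 2 * m < N) (hP : P.natDegree ≤ m) (hQ : Q.natDegree ≤ m) {r : ℝ} (hr0 : 0 < r)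
    (hr1 : r ≠ 1) (h : ∀ k : ℕ, ‖P.eval (ζ ^ k)‖ = ‖Q.eval (ζ ^ k)‖)
    (hr : ∀ k : ℕ,
      ‖(P.comp (C (r : ℂ) * X)).eval (ζ ^ k)‖ = ‖(Q.comp (C (r : ℂ) * X)).eval (ζ ^ k)‖) :
    ∃ c : ℂ, ‖c‖ = 1 ∧ P = C c * Q := by
  have hPQ := mul_conjReflect_eq_of_norm_eval_eq hζ hN hP hQ h
  have hscaled := comp_C_sq_mul_X_mul_conjReflect_eq hζ hN hP hQ hr0.ne' hr
  rcases eq_or_ne Q 0 with rfl | hQ0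
  · exact ⟨1, norm_one, by simpa using hPQ⟩
  have hP0 : P ≠ 0 := by
    rintro rfl
    simpa [hQ0] using hPQ.symm
  have hq : Function.Injective fun k : ℕ => ((r : ℂ) ^ 2) ^ k := by
    intro i j hij
    simp only at hij
    exact pow_right_injective₀ (pow_pos hr0 2)
      ((pow_eq_one_iff_of_nonneg hr0.le two_ne_zero).not.2 hr1) (by exact_mod_cast hij)
  have hconj : conjReflect m P * conjReflect m Q ≠ 0 :=
    mul_ne_zero (conjReflect_eq_zero_iff.not.2 hP0) (conjReflect_eq_zero_iff.not.2 hQ0)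
  obtain ⟨c, rfl⟩ := exists_eq_C_mul_of_comp_C_mul_X_mul_eq (P := P) hq hQ0 <|
    mul_left_cancel₀ hconj <| by
      linear_combination (Q * conjReflect m Q) * hscaled -
        (Q.comp (C ((r : ℂ) ^ 2) * X) * conjReflect m Q) * hPQ
  refine ⟨c, ?_, rfl⟩
  rw [conjReflect_C_mul] at hPQ
  have hcc : C (c * conj c) = C 1 :=
    mul_right_cancel₀ (mul_ne_zero hQ0 (conjReflect_eq_zero_iff.not.2 hQ0)) <| by
      rw [C_mul, C_1]
      linear_combination hPQ
  rw [C_inj, mul_conj, ofReal_eq_one, normSq_eq_norm_sq,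
    pow_eq_one_iff_of_nonneg (norm_nonneg c) two_ne_zero] at hcc
  exact hcc

end ConjReflect

def signalPoly {N : ℕ} (u : Fin N → ℂ) : ℂ[X] := ∑ s : Fin N, monomial s (u s)

section Signal

variable {N : ℕ} (u : Fin N → ℂ)

theorem coeff_signalPoly (s : Fin N) : (signalPoly u).coeff s = u s := by
  rw [signalPoly, finsetSum_coeff, Finset.sum_eq_single s]
  · simp
  · intro t _ hts
    rw [coeff_monomial, if_neg (Fin.val_injective.ne hts)]
  · simp

theorem eval_signalPoly (z : ℂ) : (signalPoly u).eval z = ∑ s, u s * z ^ (s : ℕ) := by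
  simp [signalPoly, eval_finsetSum]

theorem natDegree_signalPoly_le {n : ℕ} (hu : ∀ s : Fin N, n ≤ (s : ℕ) → u s = 0) :
    (signalPoly u).natDegree ≤ n - 1 := by
  refine natDegree_sum_le_of_forall_le _ _ fun s _ => ?_
  by_cases hs : n ≤ (s : ℕ)
  · simp [hu s hs]
  · exact (natDegree_monomial_le _).trans (by omega)

theorem signalPoly_mul_pow (c : ℂ) :
    signalPoly (fun s => u s * c ^ (s : ℕ)) = (signalPoly u).comp (C c * X) := by
  refine Polynomial.funext fun z => ?_
  simp only [eval_comp, eval_mul, eval_C, eval_X, eval_signalPoly, mul_pow, mul_assoc]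

theorem dft_eq_eval_signalPoly (k : ℕ) :
    dft N u k = (signalPoly u).eval (Complex.exp (-2 * π * I / N) ^ k) := by
  rw [dft, eval_signalPoly]
  refine Finset.sum_congr rfl fun s _ => ?_
  rw [← Complex.exp_nat_mul, ← Complex.exp_nat_mul]
  congr 2
  push_cast
  ring

end Signal

theorem isPrimitiveRoot_exp_neg {N : ℕ} (hN : N ≠ 0) :
    IsPrimitiveRoot (Complex.exp (-2 * π * I / N)) N := by
  simpa [neg_mul, neg_div, Complex.exp_neg] using (isPrimitiveRoot_exp N hN).inv

end PhaseRetrieval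

open PhaseRetrieval

/-- **Discrete phase retrieval with the masks `1` and `e^{-sα}`.**
If `f, g ∈ ℂ^{2n-1}` are supported in `{0, ..., n-1}`, `|f̂| = |ĝ|`, and the DFT moduli
of the exponentially masked signals also agree, then `f = e^{iφ} g` for some real `φ`. -/
theorem stmt4 (n : ℕ) (hn : 0 < n) (α : ℝ) (hα : 0 < α)
    (f g : Fin (2 * n - 1) → ℂ)
    (hf0 : ∀ s : Fin (2 * n - 1), n ≤ (s : ℕ) → f s = 0)
    (hg0 : ∀ s : Fin (2 * n - 1), n ≤ (s : ℕ) → g s = 0)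
    (hmod1 : ∀ k : ℤ, ‖dft (2 * n - 1) f k‖ = ‖dft (2 * n - 1) g k‖)
    (hmod2 : ∀ k : ℤ,
      ‖dft (2 * n - 1) (fun s => f s * Real.exp (-(s : ℕ) * α)) k‖ =
      ‖dft (2 * n - 1) (fun s => g s * Real.exp (-(s : ℕ) * α)) k‖) :
    ∃ φ : ℝ, ∀ s : Fin (2 * n - 1), f s = Complex.exp (Complex.I * φ) * g s := by
  have hmask : ∀ u : Fin (2 * n - 1) → ℂ, (fun s => u s * Real.exp (-(s : ℕ) * α)) =
      fun s => u s * (Real.exp (-α) : ℂ) ^ (s : ℕ) := by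
    intro u
    funext s
    rw [← ofReal_pow, ← Real.exp_nat_mul, mul_neg, neg_mul, mul_comm]
  have hr1 : Real.exp (-α) ≠ 1 := by
    rw [Ne, Real.exp_eq_one_iff]
    exact neg_ne_zero.2 hα.ne'
  obtain ⟨c, hc, hfg⟩ := exists_norm_eq_one_eq_C_mul_of_norm_eval_eq
    (isPrimitiveRoot_exp_neg (by omega)) (by omega : 2 * (n - 1) < 2 * n - 1)
    (natDegree_signalPoly_le f hf0) (natDegree_signalPoly_le g hg0) (Real.exp_pos (-α)) hr1
    (fun k => by simpa only [dft_eq_eval_signalPoly] using hmod1 k)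
    (fun k => by simpa only [hmask, signalPoly_mul_pow, dft_eq_eval_signalPoly] using hmod2 k)
  refine ⟨c.arg, fun s => ?_⟩
  have hc_exp : Complex.exp (I * c.arg) = c := by
    simpa [hc, mul_comm] using norm_mul_exp_arg_mul_I c
  rw [hc_exp, ← coeff_signalPoly f, hfg, coeff_C_mul, coeff_signalPoly]
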